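/- arXiv:2603.16172 — 2 statements merged into one kernel-verified Lean document; each statement's English description precedes it below -/
import Mathlib

section
/- For every real number S and every α ∈ (0,1), the principal value integral PV ∫_ℝ e^{irS}/(r|r|^α) dr satisfies |PV ∫_ℝ e^{irS}/(r|r|^α) dr| ≤ C(α)|S|^α, where C(α) = 6/(1-α). Equivalently, |2 PV ∫_0^∞ sin(rS)/r^{1+α} dr| ≤ 6|S|^α/(1-α). -/
/-!
Split the integral at `r = 1/|S|`. Near zero, `|sin (r S)| ≤ r |S|` bounds the integrand by the
integrable `|S| r^(-α)`, whose integral is `|S|^α / (1 - α)`. Beyond `1/|S|`, integrating by parts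
against the decreasing weight `r^(-(1+α))`, with `|cos (r S) / S| ≤ 1/|S|`, gives at most `2 |S|^α`,
uniformly in the upper limit. Hence every partial integral, and so the limit, is at most
`3 |S|^α / (1 - α)`, using `1 ≤ 1 / (1 - α)`.
-/

open Filter MeasureTheory Set Real
open scoped Interval

lemma abs_integral_mul_deriv_le_of_deriv_nonpos {u u' v v' : ℝ → ℝ} {a b M : ℝ} (hab : a ≤ b)
    (hu : ∀ x ∈ [[a, b]], HasDerivAt u (u' x) x) (hv : ∀ x ∈ [[a, b]], HasDerivAt v (v' x) x)
    (hu'int : IntervalIntegrable u' volume a b) (hv'int : IntervalIntegrable v' volume a b)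
    (hu'_nonpos : ∀ x ∈ [[a, b]], u' x ≤ 0) (hub : 0 ≤ u b) (hvM : ∀ x ∈ [[a, b]], |v x| ≤ M) :
    |∫ x in a..b, u x * v' x| ≤ 2 * M * u a := by
  rw [uIcc_of_le hab] at hu'_nonpos hvM
  have hdrop : u a - u b = ∫ x in a..b, -u' x := by
    simp only [intervalIntegral.integral_neg,
      intervalIntegral.integral_eq_sub_of_hasDerivAt hu hu'int]
    ring
  have hua : 0 ≤ u a := by
    have := intervalIntegral.integral_nonneg (f := fun x => -u' x) (μ := volume) hab
      fun x hx => neg_nonneg.2 (hu'_nonpos x hx)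
    linarith
  have hdrift : |∫ x in a..b, u' x * v x| ≤ M * (u a - u b) := by
    rw [hdrop, ← intervalIntegral.integral_const_mul M (fun x => -u' x), ← Real.norm_eq_abs]
    refine intervalIntegral.norm_integral_le_of_norm_le hab (Eventually.of_forall fun x hx => ?_)
      (hu'int.neg.const_mul M)
    have hx' := Ioc_subset_Icc_self hx
    rw [Real.norm_eq_abs, abs_mul, abs_of_nonpos (hu'_nonpos x hx'), mul_comm M]
    exact mul_le_mul_of_nonneg_left (hvM x hx') (neg_nonneg.2 (hu'_nonpos x hx'))
  rw [intervalIntegral.integral_mul_deriv_eq_deriv_mul hu hv hu'int hv'int]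
  calc |u b * v b - u a * v a - ∫ x in a..b, u' x * v x|
      ≤ |u b * v b| + |u a * v a| + |∫ x in a..b, u' x * v x| :=
        (abs_sub _ _).trans (add_le_add_left (abs_sub _ _) _)
    _ ≤ u b * M + u a * M + M * (u a - u b) := by
        rw [abs_mul, abs_mul, abs_of_nonneg hub, abs_of_nonneg hua]
        gcongr
        exacts [hvM b (right_mem_Icc.2 hab), hvM a (left_mem_Icc.2 hab)]
    _ = 2 * M * u a := by ring

lemma abs_sin_mul_div_rpow_le {α S r : ℝ} (hr : 0 < r) :
    |sin (r * S) / r ^ (1 + α)| ≤ |S| * r ^ (-α) := by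
  rw [rpow_add hr, rpow_one, rpow_neg hr.le, abs_div, abs_of_pos (by positivity : 0 < r * r ^ α),
    div_le_iff₀ (by positivity)]
  calc |sin (r * S)| ≤ |r * S| := abs_sin_le_abs
    _ = |S| * (r ^ α)⁻¹ * (r * r ^ α) := by
        rw [abs_mul, abs_of_pos hr]
        field_simp

lemma intervalIntegrable_sin_mul_div_rpow {α : ℝ} (hα : α < 1) (S : ℝ) {a b : ℝ} (ha : 0 ≤ a)
    (hb : 0 ≤ b) : IntervalIntegrable (fun r => sin (r * S) / r ^ (1 + α)) volume a b := by
  refine ((intervalIntegral.intervalIntegrable_rpow' (r := -α) (by linarith)).const_mul |S|)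
    |>.mono_fun (by fun_prop : Measurable _).aestronglyMeasurable
    ((ae_restrict_iff' measurableSet_uIoc).2 (Eventually.of_forall fun r hr => ?_))
  have hr : 0 < r := (le_min ha hb).trans_lt hr.1
  dsimp only
  rw [Real.norm_eq_abs, Real.norm_eq_abs, abs_of_nonneg (by positivity : 0 ≤ |S| * r ^ (-α))]
  exact abs_sin_mul_div_rpow_le hr

lemma abs_integral_sin_mul_div_rpow_near_zero_le {α S a : ℝ} (hα : α < 1) (ha : 0 ≤ a) :
    |∫ r in 0..a, sin (r * S) / r ^ (1 + α)| ≤ |S| * a ^ (1 - α) / (1 - α) := by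
  calc |∫ r in 0..a, sin (r * S) / r ^ (1 + α)| ≤ ∫ r in 0..a, |S| * r ^ (-α) := by
        rw [← Real.norm_eq_abs]
        exact intervalIntegral.norm_integral_le_of_norm_le ha
          (Eventually.of_forall fun r hr => abs_sin_mul_div_rpow_le hr.1)
          ((intervalIntegral.intervalIntegrable_rpow' (r := -α) (by linarith)).const_mul _)
    _ = |S| * a ^ (1 - α) / (1 - α) := by
        rw [intervalIntegral.integral_const_mul, integral_rpow (Or.inl (by linarith)),
          neg_add_eq_sub, zero_rpow (by linarith), sub_zero, mul_div_assoc]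

lemma abs_integral_sin_mul_div_rpow_tail_le {α S a R : ℝ} (hα : -1 ≤ α) (hS : S ≠ 0)
    (ha : 0 < a) (haR : a ≤ R) :
    |∫ r in a..R, sin (r * S) / r ^ (1 + α)| ≤ 2 * a ^ (-(1 + α)) / |S| := by
  have hpos : ∀ x ∈ [[a, R]], 0 < x := fun x hx => ha.trans_le (uIcc_of_le haR ▸ hx).1
  have hcos : ∀ x, HasDerivAt (fun y => -cos (y * S) / S) (sin (x * S)) x := fun x => by
    have := (hasDerivAt_mul_const (x := x) S).cos.neg.div_const S
    rwa [neg_mul, neg_neg, mul_div_cancel_right₀ _ hS] at this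
  have hcont : ContinuousOn (fun x : ℝ => -(1 + α) * x ^ (-(1 + α) - 1)) [[a, R]] :=
    continuousOn_const.mul fun x hx =>
      (continuousAt_rpow_const x _ (Or.inl (hpos x hx).ne')).continuousWithinAt
  rw [intervalIntegral.integral_congr (g := fun x => x ^ (-(1 + α)) * sin (x * S))
    fun x hx => by simp only [rpow_neg (hpos x hx).le, div_eq_inv_mul] ]
  convert abs_integral_mul_deriv_le_of_deriv_nonpos haR
    (fun x hx => hasDerivAt_rpow_const (Or.inl (hpos x hx).ne')) (fun x _ => hcos x)
    hcont.intervalIntegrable ((by fun_prop : Continuous fun x => sin (x * S)).intervalIntegrable _ _)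
    (fun x hx => ?_) (rpow_nonneg (ha.trans_le haR).le _) (M := 1 / |S|) (fun x _ => ?_) using 1
  · ring
  · exact mul_nonpos_of_nonpos_of_nonneg (by linarith) (rpow_nonneg (hpos x hx).le _)
  · rw [abs_div, abs_neg]
    exact div_le_div_of_nonneg_right (abs_cos_le_one _) (abs_nonneg _)

lemma abs_integral_Ioc_sin_mul_div_rpow_le {α S R : ℝ} (hα0 : 0 ≤ α) (hα1 : α < 1) (hS : S ≠ 0)
    (hR : |S|⁻¹ ≤ R) :
    |∫ r in Ioc 0 R, sin (r * S) / r ^ (1 + α)| ≤ 3 * |S| ^ α / (1 - α) := by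
  have hs : 0 < |S| := abs_pos.2 hS
  have ha : 0 < |S|⁻¹ := inv_pos.2 hs
  have hR0 : 0 ≤ R := ha.le.trans hR
  rw [← intervalIntegral.integral_of_le hR0, ← intervalIntegral.integral_add_adjacent_intervals
    (intervalIntegrable_sin_mul_div_rpow hα1 S le_rfl ha.le)
    (intervalIntegrable_sin_mul_div_rpow hα1 S ha.le hR0)]
  have hnear := abs_integral_sin_mul_div_rpow_near_zero_le (S := S) hα1 ha.le
  have htail := abs_integral_sin_mul_div_rpow_tail_le (by linarith) hS ha hR (α := α)
  have hnear_pow : |S| * |S|⁻¹ ^ (1 - α) = |S| ^ α := by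
    rw [inv_rpow hs.le, ← rpow_neg hs.le, neg_sub, rpow_sub_one hs.ne', mul_div_cancel₀ _ hs.ne']
  have htail_pow : |S|⁻¹ ^ (-(1 + α)) / |S| = |S| ^ α := by
    rw [inv_rpow hs.le, ← rpow_neg hs.le, neg_neg, rpow_add hs, rpow_one,
      mul_div_cancel_left₀ _ hs.ne']
  rw [hnear_pow] at hnear
  rw [mul_div_assoc, htail_pow] at htail
  have h2 : 2 * |S| ^ α ≤ 2 * |S| ^ α / (1 - α) :=
    le_div_self (by positivity) (by linarith) (by linarith)
  calc _ ≤ _ := abs_add_le _ _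
    _ ≤ 3 * |S| ^ α / (1 - α) := by
        rw [show 3 * |S| ^ α / (1 - α) = |S| ^ α / (1 - α) + 2 * |S| ^ α / (1 - α) by ring]
        linarith

/-- Principal value bound: if the PV integral
`PV ∫_ℝ e^{irS}/(r|r|^α) dr = 2 lim_{R→∞} ∫_0^R sin(rS)/r^{1+α} dr` exists with value `2L`,
then `|2L| ≤ 6|S|^α/(1-α)`. -/
theorem stmt0 (α S L : ℝ) (hα : α ∈ Set.Ioo (0:ℝ) 1)
    (hL : Tendsto (fun R : ℝ => ∫ r in Set.Ioc (0:ℝ) R, Real.sin (r * S) / r ^ (1 + α))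
      atTop (nhds L)) :
    |2 * L| ≤ 6 * |S| ^ α / (1 - α) := by
  obtain ⟨hα0, hα1⟩ := hα
  rcases eq_or_ne S 0 with rfl | hS
  · have hL0 : L = 0 := tendsto_nhds_unique hL (by simp)
    rw [hL0, mul_zero, abs_zero]
    exact div_nonneg (by positivity) (by linarith)
  · have hbound := le_of_tendsto hL.abs ((eventually_ge_atTop |S|⁻¹).mono fun R hR =>
      abs_integral_Ioc_sin_mul_div_rpow_le hα0.le hα1 hS hR)
    calc |2 * L| = 2 * |L| := by rw [abs_mul, abs_two]
      _ ≤ 2 * (3 * |S| ^ α / (1 - α)) := by linarith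
      _ = 6 * |S| ^ α / (1 - α) := by ring
end

section
/- Let α ∈ [0,1), let M > 0, K > 0, and let f : ℝ² → ℝ be bounded measurable with 0 ≤ f ≤ M₀ := ‖f‖_{L∞}, ‖f‖_{L¹} ≤ K, attaining its maximum M = f(x*) > 0 at x*. Then the nonnegative integral D₃ = ∫_{ℝ²} (f(x*) - f(y)) / [|x*-y|² + (f(x*)-f(y))²]^{(3+α)/2} dy satisfies D₃ ≥ (π/2) · M^{(3+α)/2} / [1 + 2K/π + 4M₀³]^{(3+α)/2}. -/
/-!
Take the disc around `x*` of radius `r` with `π r² = (2K + π) / M`. By Chebyshev's inequality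
`f ≥ M/2` only on a set of measure at most `2K/M`, so on a part `V` of the disc of measure at
least `π / M` the numerator `f(x*) - f(y)` exceeds `M/2`, while the base of the denominator is at
most `r² + 4M₀³/M`. Integrating this pointwise bound over `V` gives the estimate.
-/

open Real MeasureTheory Metric

section Chebyshev

variable {α : Type*} [MeasurableSpace α] {μ : Measure α} {f : α → ℝ} {t K : ℝ}

theorem measure_ge_le_ofReal_div_of_integral_le (hf : 0 ≤ᵐ[μ] f) (hfi : Integrable f μ)
    (ht : 0 < t) (hK : ∫ x, f x ∂μ ≤ K) :
    μ {x | t ≤ f x} ≤ ENNReal.ofReal (K / t) := by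
  rw [← ofReal_measureReal (hfi.measure_ge_lt_top ht).ne]
  exact ENNReal.ofReal_le_ofReal <|
    (le_div_iff₀' ht).2 <| (mul_meas_ge_le_integral_of_nonneg hf hfi t).trans hK

theorem measure_sub_ofReal_div_le_measure_inter_lt (s : Set α) (hf : 0 ≤ᵐ[μ] f)
    (hfi : Integrable f μ) (ht : 0 < t) (hK : ∫ x, f x ∂μ ≤ K) :
    μ s - ENNReal.ofReal (K / t) ≤ μ (s ∩ {x | f x < t}) := by
  rw [tsub_le_iff_right]
  calc μ s ≤ μ (s ∩ {x | f x < t}) + μ (s \ {x | f x < t}) :=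
        measure_le_inter_add_sdiff μ _ _
    _ ≤ μ (s ∩ {x | f x < t}) + ENNReal.ofReal (K / t) := by
      gcongr
      refine (measure_mono fun x (hx : x ∈ s ∧ ¬f x < t) ↦ not_lt.1 hx.2).trans ?_
      exact measure_ge_le_ofReal_div_of_integral_le hf hfi ht hK

end Chebyshev

theorem const_mul_measure_le_lintegral {α : Type*} [MeasurableSpace α] {μ : Measure α}
    {s : Set α} (hs : MeasurableSet s) {c : ENNReal} {g : α → ENNReal}
    (hg : ∀ x ∈ s, c ≤ g x) :
    c * μ s ≤ ∫⁻ x, g x ∂μ :=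
  calc c * μ s = ∫⁻ _ in s, c ∂μ := (setLIntegral_const s c).symm
    _ ≤ ∫⁻ x in s, g x ∂μ := setLIntegral_mono' hs hg
    _ ≤ ∫⁻ x, g x ∂μ := setLIntegral_le_lintegral s g

theorem half_div_rpow_le_div_rpow_of_dist_le {E : Type*} [SeminormedAddCommGroup E] {f : E → ℝ}
    {x y : E} {M M₀ r p : ℝ} (hp : 0 ≤ p) (hM : M = f x) (hMpos : 0 < M) (hMM₀ : M ≤ M₀)
    (hfy : 0 ≤ f y) (hy : f y < M / 2) (hxy : dist y x ≤ r) :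
    M / 2 / (r ^ 2 + 4 * M₀ ^ 3 / M) ^ p ≤
      (f x - f y) / (‖x - y‖ ^ 2 + (f x - f y) ^ 2) ^ p := by
  have hd : M / 2 < f x - f y := by linarith
  have hdM : f x - f y ≤ M := by linarith
  have hnorm : ‖x - y‖ ≤ r := by rwa [← dist_eq_norm, dist_comm]
  have hsq : (f x - f y) ^ 2 ≤ 4 * M₀ ^ 3 / M := by
    rw [le_div_iff₀ hMpos]
    have hM₀ : 0 ≤ M₀ := by linarith
    calc (f x - f y) ^ 2 * M ≤ M ^ 2 * M := by gcongr; linarith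
      _ ≤ M₀ ^ 3 := by rw [← pow_succ]; gcongr
      _ ≤ 4 * M₀ ^ 3 := by linarith [pow_nonneg hM₀ 3]
  have hpos : 0 < ‖x - y‖ ^ 2 + (f x - f y) ^ 2 := by nlinarith [sq_nonneg ‖x - y‖]
  gcongr
  linarith

theorem stmt13_general (α : ℝ) (hα : α ∈ Set.Ico (0:ℝ) 1)
    (f : EuclideanSpace ℝ (Fin 2) → ℝ) (xstar : EuclideanSpace ℝ (Fin 2))
    (K M M₀ : ℝ) (hK : 0 < K)
    (hmeas : Measurable f) (hnonneg : ∀ y, 0 ≤ f y) (hbdd : ∀ y, f y ≤ M₀)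
    (hM : M = f xstar) (hMpos : 0 < M)
    (hint : Integrable f) (hL1 : ∫ y, f y ≤ K) :
    ENNReal.ofReal ((π / 2) * M ^ ((3 + α) / 2) / (1 + 2 * K / π + 4 * M₀ ^ 3) ^ ((3 + α) / 2))
      ≤ ∫⁻ y, ENNReal.ofReal
          ((f xstar - f y) /
            (‖xstar - y‖ ^ 2 + (f xstar - f y) ^ 2) ^ ((3 + α) / 2)) := by
  have hp : 0 ≤ (3 + α) / 2 := by linarith [hα.1]
  set p := (3 + α) / 2
  have hMM₀ : M ≤ M₀ := hM ▸ hbdd xstar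
  have hM₀ : 0 < M₀ := hMpos.trans_le hMM₀
  set r := √((2 * K / π + 1) / M)
  have hr2 : r ^ 2 = (2 * K / π + 1) / M := sq_sqrt (by positivity)
  set V := closedBall xstar r ∩ {y | f y < M / 2}
  have hV : ENNReal.ofReal (π / M) ≤ volume V := by
    convert measure_sub_ofReal_div_le_measure_inter_lt (closedBall xstar r)
      (ae_of_all _ hnonneg) hint (half_pos hMpos) hL1 using 1
    rw [EuclideanSpace.volume_closedBall_fin_two, ← ENNReal.ofReal_pow (sqrt_nonneg _),
      ← ENNReal.ofReal_mul (by positivity), ← ENNReal.ofReal_sub _ (by positivity), hr2]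
    congr 1
    field_simp
    ring
  have hVmeas : MeasurableSet V :=
    isClosed_closedBall.measurableSet.inter (measurableSet_lt hmeas measurable_const)
  set c := M / 2 / (r ^ 2 + 4 * M₀ ^ 3 / M) ^ p with hc
  calc ENNReal.ofReal ((π / 2) * M ^ p / (1 + 2 * K / π + 4 * M₀ ^ 3) ^ p)
      = ENNReal.ofReal c * ENNReal.ofReal (π / M) := by
        rw [← ENNReal.ofReal_mul (by positivity), hc, hr2, ← add_div,
          div_rpow (by positivity) hMpos.le]
        congr 1
        field_simp
        ring_nf
    _ ≤ ENNReal.ofReal c * volume V := by gcongr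
    _ ≤ _ := const_mul_measure_le_lintegral hVmeas fun y ⟨hyr, hy⟩ ↦
        ENNReal.ofReal_le_ofReal <|
          half_div_rpow_le_div_rpow_of_dist_le hp hM hMpos hMM₀ (hnonneg y) hy hyr

/-- Lower bound on the dissipation integral `D₃` at the maximum point: for `0 ≤ f ≤ M₀`,
`‖f‖_{L¹} ≤ K` and maximum `M = f(x*) > 0`,
`∫ (f(x*)-f(y))/[|x*-y|² + (f(x*)-f(y))²]^{(3+α)/2} dy
  ≥ (π/2) M^{(3+α)/2} / [1 + 2K/π + 4M₀³]^{(3+α)/2}`. -/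
theorem stmt13 (α : ℝ) (hα : α ∈ Set.Ico (0:ℝ) 1)
    (f : EuclideanSpace ℝ (Fin 2) → ℝ) (xstar : EuclideanSpace ℝ (Fin 2))
    (K M M₀ : ℝ) (hK : 0 < K) (hM₀ : 0 < M₀)
    (hmeas : Measurable f) (hnonneg : ∀ y, 0 ≤ f y) (hbdd : ∀ y, f y ≤ M₀)
    (hmax : ∀ y, f y ≤ f xstar) (hM : M = f xstar) (hMpos : 0 < M)
    (hint : Integrable f) (hL1 : ∫ y, f y ≤ K) :
    ENNReal.ofReal ((π / 2) * M ^ ((3 + α) / 2) / (1 + 2 * K / π + 4 * M₀ ^ 3) ^ ((3 + α) / 2))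
      ≤ ∫⁻ y, ENNReal.ofReal
          ((f xstar - f y) /
            (‖xstar - y‖ ^ 2 + (f xstar - f y) ^ 2) ^ ((3 + α) / 2)) :=
  stmt13_general α hα f xstar K M M₀ hK hmeas hnonneg hbdd hM hMpos hint hL1
end
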